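/- arXiv:1411.1919 — 2 statements merged into one kernel-verified Lean document; each statement's English description precedes it below -/
import Mathlib

section
/- Suppose M is a perfect matching of G, yz(e) ≤ w(e) for every e ∈ M (near tightness), and whenever z(B) ≠ 0, M contains exactly ⌊|B|/2⌋ edges with both endpoints in B (active blossoms). Then w(M) ≥ Σ_{v∈V} y(v) + Σ_B z(B)·⌊|B|/2⌋; that is, the weight of M is at least the dual objective yz(V). -/
open Finset
open scoped Classical

/-- `yz(e)` for an edge `e = {u,v}`: `y u + y v + ∑_{B ⊇ {u,v}} z B`. -/
noncomputable def yzE {V : Type*} [Fintype V] (y : V → ℤ) (z : Finset V → ℤ) : Sym2 V → ℤ :=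
  Sym2.lift ⟨fun u v => y u + y v + ∑ B ∈ Finset.univ.filter (fun B : Finset V => u ∈ B ∧ v ∈ B), z B,
    fun u v => by
      dsimp only
      rw [add_comm (y u) (y v)]
      congr 1
      apply Finset.sum_congr _ (fun _ _ => rfl)
      ext B
      simp [and_comm]⟩

/-- `M` is a matching of `G`: a set of edges of `G`, pairwise vertex-disjoint. -/
def IsMatchingF {V : Type*} (G : SimpleGraph V) (M : Finset (Sym2 V)) : Prop :=
  (∀ e ∈ M, e ∈ G.edgeSet) ∧ ∀ e ∈ M, ∀ f ∈ M, e ≠ f → ∀ v : V, v ∈ e → v ∉ f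

/-- A matching is perfect if every vertex is covered. -/
def IsPerfectF {V : Type*} (M : Finset (Sym2 V)) : Prop := ∀ v : V, ∃ e ∈ M, v ∈ e

/-- A vertex is free (unmatched) if it lies on no edge of `M`. -/
def isFreeV {V : Type*} (M : Finset (Sym2 V)) (v : V) : Prop := ∀ e ∈ M, v ∉ e

/-- The edges of `M` with both endpoints in `B` (i.e. `M ∩ E(B)`). -/
noncomputable def edgesWithin {V : Type*} (M : Finset (Sym2 V)) (B : Finset V) : Finset (Sym2 V) :=
  M.filter (fun e => ∀ v ∈ e, v ∈ B)

/-- The dual objective `yz(V) = ∑ y(v) + ∑_B z(B)·⌊|B|/2⌋`. -/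
noncomputable def dualObj {V : Type*} [Fintype V] (y : V → ℤ) (z : Finset V → ℤ) : ℤ :=
  (∑ v, y v) + ∑ B : Finset V, z B * ((B.card / 2 : ℕ) : ℤ)


/-!
Summing near tightness over the edges of `M` bounds `w(M)` below by `∑_{e ∈ M} yz(e)`, and this sum
is exactly `yz(V)`: since `M` is perfect, every `y(v)` is counted once, and every `z(B)` is counted
once per edge of `M` inside `B`, i.e. `⌊|B|/2⌋` times when `B` is active.
-/

section

variable {V : Type*}

theorem filter_mem_eq_singleton {M : Finset (Sym2 V)}
    (hdisj : ∀ e ∈ M, ∀ f ∈ M, e ≠ f → ∀ v : V, v ∈ e → v ∉ f)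
    {v : V} {e : Sym2 V} (he : e ∈ M) (hve : v ∈ e) :
    M.filter (v ∈ ·) = {e} := by
  ext f
  simp only [mem_filter, mem_singleton]
  constructor
  · rintro ⟨hf, hvf⟩
    by_contra hne
    exact hdisj f hf e he hne v hvf hve
  · rintro rfl
    exact ⟨he, hve⟩

variable [Fintype V]

theorem yzE_eq_of_not_isDiag (y : V → ℤ) (z : Finset V → ℤ) {e : Sym2 V} (he : ¬e.IsDiag) :
    yzE y z e = ∑ v ∈ univ.filter (· ∈ e), y v
      + ∑ B ∈ univ.filter (fun B : Finset V => ∀ v ∈ e, v ∈ B), z B := by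
  induction e using Sym2.inductionOn with
  | hf a b =>
    have hab : a ≠ b := by simpa using he
    have hends : univ.filter (· ∈ s(a, b)) = ({a, b} : Finset V) := by
      ext v; simp
    rw [hends, sum_pair hab]
    simp [yzE]

theorem sum_sum_mem_eq_sum {β : Type*} [AddCommMonoid β] {M : Finset (Sym2 V)}
    (hdisj : ∀ e ∈ M, ∀ f ∈ M, e ≠ f → ∀ v : V, v ∈ e → v ∉ f) (hMp : IsPerfectF M)
    (f : V → β) :
    ∑ e ∈ M, ∑ v ∈ univ.filter (· ∈ e), f v = ∑ v, f v := by
  simp_rw [sum_filter]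
  rw [sum_comm]
  refine sum_congr rfl fun v _ => ?_
  obtain ⟨e, he, hve⟩ := hMp v
  rw [← sum_filter, filter_mem_eq_singleton hdisj he hve, sum_singleton]

theorem sum_sum_superset_eq_sum_card_edgesWithin {β : Type*} [AddCommMonoid β]
    (M : Finset (Sym2 V)) (z : Finset V → β) :
    ∑ e ∈ M, ∑ B ∈ univ.filter (fun B : Finset V => ∀ v ∈ e, v ∈ B), z B
      = ∑ B, #(edgesWithin M B) • z B := by
  simp_rw [sum_filter]
  rw [sum_comm]
  refine sum_congr rfl fun B _ => ?_
  rw [← sum_filter, sum_const, edgesWithin]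
  congr

theorem sum_yzE_eq_dualObj {G : SimpleGraph V} (y : V → ℤ) (z : Finset V → ℤ)
    {M : Finset (Sym2 V)} (hM : IsMatchingF G M) (hMp : IsPerfectF M)
    (hactive : ∀ B : Finset V, z B ≠ 0 → (edgesWithin M B).card = B.card / 2) :
    ∑ e ∈ M, yzE y z e = dualObj y z := by
  rw [sum_congr rfl fun e he => yzE_eq_of_not_isDiag y z (G.not_isDiag_of_mem_edgeSet (hM.1 e he)),
    sum_add_distrib, sum_sum_mem_eq_sum hM.2 hMp, sum_sum_superset_eq_sum_card_edgesWithin]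
  refine congrArg _ (sum_congr rfl fun B _ => ?_)
  by_cases hzB : z B = 0
  · simp [hzB]
  · rw [hactive B hzB, nsmul_eq_mul, mul_comm]

end

theorem dualObj_le_weight_general {V : Type*} [Fintype V] (G : SimpleGraph V)
    (w : Sym2 V → ℤ) (y : V → ℤ) (z : Finset V → ℤ)
    (M : Finset (Sym2 V)) (hM : IsMatchingF G M) (hMp : IsPerfectF M)
    (hneartight : ∀ e ∈ M, yzE y z e ≤ w e)
    (hactive : ∀ B : Finset V, z B ≠ 0 → (edgesWithin M B).card = B.card / 2) :
    dualObj y z ≤ ∑ e ∈ M, w e :=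
  calc dualObj y z = ∑ e ∈ M, yzE y z e := (sum_yzE_eq_dualObj y z hM hMp hactive).symm
    _ ≤ ∑ e ∈ M, w e := sum_le_sum hneartight

/-- for a perfect matching satisfying near tightness and active blossoms,
the weight of `M` is at least the dual objective `yz(V)`. -/
theorem dualObj_le_weight {V : Type*} [Fintype V] (G : SimpleGraph V)
    (w : Sym2 V → ℤ) (y : V → ℤ) (z : Finset V → ℤ)
    (hsupp : ∀ B : Finset V, z B ≠ 0 → Odd B.card ∧ 3 ≤ B.card)
    (M : Finset (Sym2 V)) (hM : IsMatchingF G M) (hMp : IsPerfectF M)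
    (hneartight : ∀ e ∈ M, yzE y z e ≤ w e)
    (hactive : ∀ B : Finset V, z B ≠ 0 → (edgesWithin M B).card = B.card / 2) :
    dualObj y z ≤ ∑ e ∈ M, w e :=
  dualObj_le_weight_general G w y z M hM hMp hneartight hactive
end

section
/- (Lemma 10) Let τ ≥ 1 and n ≥ 1 be integers, let M be a matching of G leaving exactly f vertices free, and let y, z satisfy: (i) z(B) ≥ 0 for every odd set B; (ii) whenever z(B) > 0, M contains exactly ⌊|B|/2⌋ edges with both endpoints in B; (iii) yz(e) ≥ w(e) − 2 for every edge e; (iv) yz(e) ≤ w(e) for every e ∈ M. Suppose y₆ : V → ℤ is a function with y(u) = y₆(u) − τ for every free vertex u, and suppose there exists a perfect matching M' with |M'| ≤ n such that w(M) ≤ w(M') + 8n − Σ_{u free} y₆(u). Then f·τ ≤ 10n, i.e., f ≤ 10n/τ. -/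
open Finset
open scoped Classical

/-!
Summing `yz` over `M` gives exactly the dual objective minus `y` of the free vertices, because
every odd set with `z(B) > 0` is full in `M`; summing `yz` over the perfect matching `M'` gives at
most the dual objective, because `z ≥ 0` and no matching has more than `⌊|B|/2⌋` edges inside `B`.
Near-domination costs at most `2` per edge of `M'`, so
`yz(V) - y(F) ≤ w(M) ≤ w(M') + 8n - y₆(F) ≤ yz(V) + 10n - y₆(F)`,
and `y₆ - y = τ` on each of the `f` free vertices.
-/

section

variable {V : Type*} {G : SimpleGraph V} {M : Finset (Sym2 V)}

lemma mem_edgesWithin {B : Finset V} {e : Sym2 V} :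
    e ∈ edgesWithin M B ↔ e ∈ M ∧ ∀ v ∈ e, v ∈ B := by
  simp [edgesWithin]

lemma IsMatchingF.not_isDiag (hM : IsMatchingF G M) {e : Sym2 V} (he : e ∈ M) : ¬ e.IsDiag :=
  G.not_isDiag_of_mem_edgeSet (hM.1 e he)

lemma IsMatchingF.pairwiseDisjoint_toFinset (hM : IsMatchingF G M) :
    (M : Set (Sym2 V)).PairwiseDisjoint Sym2.toFinset :=
  fun e he e' he' hne => disjoint_left.mpr fun v hv hv' =>
    hM.2 e he e' he' hne v (Sym2.mem_toFinset.mp hv) (Sym2.mem_toFinset.mp hv')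

lemma IsMatchingF.card_edgesWithin_le (hM : IsMatchingF G M) (B : Finset V) :
    #(edgesWithin M B) ≤ #B / 2 := by
  rw [Nat.le_div_iff_mul_le two_pos]
  calc #(edgesWithin M B) * 2 = #((edgesWithin M B).biUnion Sym2.toFinset) := by
        rw [card_biUnion (hM.pairwiseDisjoint_toFinset.subset fun e he =>
            (mem_edgesWithin.mp he).1),
          sum_congr rfl fun e he => Sym2.card_toFinset_of_not_isDiag e
            (hM.not_isDiag (mem_edgesWithin.mp he).1), sum_const, smul_eq_mul]
    _ ≤ #B := card_le_card fun v hv => by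
        obtain ⟨e, he, hve⟩ := mem_biUnion.mp hv
        exact (mem_edgesWithin.mp he).2 v (Sym2.mem_toFinset.mp hve)

end

section

variable {V : Type*} [Fintype V]

lemma yzE_eq_sum_toFinset_add (y : V → ℤ) (z : Finset V → ℤ) {e : Sym2 V} (he : ¬ e.IsDiag) :
    yzE y z e = ∑ v ∈ e.toFinset, y v + ∑ B ∈ univ.filter (fun B => ∀ x ∈ e, x ∈ B), z B := by
  induction e using Sym2.ind with
  | _ u v =>
    rw [Sym2.mk_isDiag_iff] at he
    simp [yzE, Sym2.toFinset_mk_eq, sum_pair he, Sym2.mem_iff, or_imp, forall_and]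

variable {G : SimpleGraph V} {M : Finset (Sym2 V)}

lemma IsMatchingF.sum_yzE (hM : IsMatchingF G M) (y : V → ℤ) (z : Finset V → ℤ) :
    ∑ e ∈ M, yzE y z e =
      ∑ v ∈ univ.filter (fun v => ¬ isFreeV M v), y v + ∑ B, z B * #(edgesWithin M B) := by
  have hcovered : univ.filter (fun v => ¬ isFreeV M v) = M.biUnion Sym2.toFinset := by
    ext v
    simp [isFreeV, Sym2.mem_toFinset]
  have hswap : ∑ e ∈ M, ∑ B ∈ univ.filter (fun B => ∀ x ∈ e, x ∈ B), z B =
      ∑ B, z B * #(edgesWithin M B) := by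
    simp_rw [sum_filter]
    rw [sum_comm]
    refine sum_congr rfl fun B _ => ?_
    rw [← sum_filter, sum_const, nsmul_eq_mul, mul_comm]
    congr 3
    ext e
    simp [mem_edgesWithin]
  rw [sum_congr rfl fun e he => yzE_eq_sum_toFinset_add y z (hM.not_isDiag he),
    sum_add_distrib, hcovered, sum_biUnion hM.pairwiseDisjoint_toFinset, hswap]

lemma IsMatchingF.sum_yzE_eq_dualObj_sub (hM : IsMatchingF G M) (y : V → ℤ)
    {z : Finset V → ℤ} (hactive : ∀ B, z B ≠ 0 → #(edgesWithin M B) = #B / 2) :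
    ∑ e ∈ M, yzE y z e = dualObj y z - ∑ u ∈ univ.filter (fun u => isFreeV M u), y u := by
  have hfull : ∑ B, z B * #(edgesWithin M B) = ∑ B, z B * ((#B / 2 : ℕ) : ℤ) :=
    sum_congr rfl fun B _ => by
      rcases eq_or_ne (z B) 0 with hB | hB
      · simp [hB]
      · rw [hactive B hB]
  rw [hM.sum_yzE, dualObj, hfull, ← sum_filter_add_sum_filter_not univ (fun u => isFreeV M u) y]
  ring

lemma IsMatchingF.sum_yzE_le_dualObj (hM : IsMatchingF G M) (hperfect : IsPerfectF M)
    (y : V → ℤ) {z : Finset V → ℤ} (hz : ∀ B, 0 ≤ z B) :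
    ∑ e ∈ M, yzE y z e ≤ dualObj y z := by
  have hcovered : univ.filter (fun v => ¬ isFreeV M v) = univ :=
    filter_true_of_mem fun v _ hfree =>
      let ⟨e, he, hve⟩ := hperfect v
      hfree e he hve
  rw [hM.sum_yzE, hcovered, dualObj]
  gcongr with B
  · exact hz B
  · exact hM.card_edgesWithin_le B

end

theorem free_vertices_bound_general {V : Type*} [Fintype V] (G : SimpleGraph V)
    (w : Sym2 V → ℤ) (y y₆ : V → ℤ) (z : Finset V → ℤ)
    (τ n : ℤ)
    (M : Finset (Sym2 V)) (hM : IsMatchingF G M)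
    (f : ℕ) (hf : f = (Finset.univ.filter (fun u => isFreeV M u)).card)
    (hsupp : ∀ B : Finset V, z B ≠ 0 → Odd B.card ∧ 3 ≤ B.card)
    (hz : ∀ B : Finset V, Odd B.card → 0 ≤ z B)
    (hactive : ∀ B : Finset V, 0 < z B → (edgesWithin M B).card = B.card / 2)
    (hneardom : ∀ e ∈ G.edgeSet, w e - 2 ≤ yzE y z e)
    (hneartight : ∀ e ∈ M, yzE y z e ≤ w e)
    (hy₆ : ∀ u : V, isFreeV M u → y u = y₆ u - τ)
    (M' : Finset (Sym2 V)) (hM' : IsMatchingF G M') (hM'p : IsPerfectF M')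
    (hM'card : (M'.card : ℤ) ≤ n)
    (hw : ∑ e ∈ M, w e ≤
      (∑ e ∈ M', w e) + 8 * n - ∑ u ∈ Finset.univ.filter (fun u => isFreeV M u), y₆ u) :
    (f : ℤ) * τ ≤ 10 * n := by
  have hz0 : ∀ B, 0 ≤ z B := fun B =>
    (eq_or_ne (z B) 0).elim (·.ge) fun hB => hz B (hsupp B hB).1
  set F := univ.filter (fun u => isFreeV M u)
  have hlower : dualObj y z - ∑ u ∈ F, y u ≤ ∑ e ∈ M, w e :=
    hM.sum_yzE_eq_dualObj_sub y (fun B hB => hactive B ((hz0 B).lt_of_ne' hB)) ▸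
      sum_le_sum hneartight
  have hupper : ∑ e ∈ M', w e ≤ dualObj y z + 2 * n :=
    calc ∑ e ∈ M', w e ≤ ∑ e ∈ M', (yzE y z e + 2) :=
          sum_le_sum fun e he => by linarith [hneardom e (hM'.1 e he)]
      _ = ∑ e ∈ M', yzE y z e + 2 * #M' := by
          rw [sum_add_distrib, sum_const, nsmul_eq_mul, mul_comm]
      _ ≤ dualObj y z + 2 * n := by linarith [hM'.sum_yzE_le_dualObj hM'p y hz0]
  have hgap : ∑ u ∈ F, y₆ u - ∑ u ∈ F, y u = f * τ := by
    rw [← sum_sub_distrib,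
      sum_congr rfl fun u hu => by rw [hy₆ u (mem_filter.mp hu).2, sub_sub_cancel],
      sum_const, nsmul_eq_mul, hf]
  linarith

/-- Lemma 10: if the matching `M` leaves `f` vertices free, relaxed
complementary slackness holds, `y(u) = y₆(u) - τ` on free vertices, and there is a
perfect matching `M'` with `|M'| ≤ n` and `w(M) ≤ w(M') + 8n - ∑_{u free} y₆(u)`,
then `f·τ ≤ 10n`. -/
theorem free_vertices_bound {V : Type*} [Fintype V] (G : SimpleGraph V)
    (w : Sym2 V → ℤ) (y y₆ : V → ℤ) (z : Finset V → ℤ)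
    (τ n : ℤ) (hτ : 1 ≤ τ) (hn : 1 ≤ n)
    (M : Finset (Sym2 V)) (hM : IsMatchingF G M)
    (f : ℕ) (hf : f = (Finset.univ.filter (fun u => isFreeV M u)).card)
    (hsupp : ∀ B : Finset V, z B ≠ 0 → Odd B.card ∧ 3 ≤ B.card)
    (hz : ∀ B : Finset V, Odd B.card → 0 ≤ z B)
    (hactive : ∀ B : Finset V, 0 < z B → (edgesWithin M B).card = B.card / 2)
    (hneardom : ∀ e ∈ G.edgeSet, w e - 2 ≤ yzE y z e)
    (hneartight : ∀ e ∈ M, yzE y z e ≤ w e)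
    (hy₆ : ∀ u : V, isFreeV M u → y u = y₆ u - τ)
    (M' : Finset (Sym2 V)) (hM' : IsMatchingF G M') (hM'p : IsPerfectF M')
    (hM'card : (M'.card : ℤ) ≤ n)
    (hw : ∑ e ∈ M, w e ≤
      (∑ e ∈ M', w e) + 8 * n - ∑ u ∈ Finset.univ.filter (fun u => isFreeV M u), y₆ u) :
    (f : ℤ) * τ ≤ 10 * n :=
  free_vertices_bound_general G w y y₆ z τ n M hM f hf hsupp hz hactive hneardom hneartight hy₆ M'
    hM' hM'p hM'card hw
end
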